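/- arXiv:1301.6857 — 2 statements merged into one kernel-verified Lean document; each statement's English description precedes it below -/
import Mathlib

section
/- Let p_1 ≤ p_2 ≤ p_3 ≤ p_4 be nonnegative integers with p_4 > p_2 and p_3 > p_1, and let n satisfy binom(n+2,2) = Σ_{i=1}^4 binom(p_i+2,2). Then the Hermite interpolation scheme on 4 nodes in ℝ² is singular: for every choice of pairwise distinct points X_1, X_2, X_3, X_4 ∈ ℝ² there exists a nonzero polynomial f in two variables of total degree at most n such that ∂^α f(X_q) = 0 for all 1 ≤ q ≤ 4 and all multi-indices α ∈ ℕ² with |α| ≤ p_q. -/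
open MvPolynomial

/-- The iterated partial derivative `∂^α` as a linear endomorphism of `ℝ[x_1,…,x_d]`. -/
noncomputable def pderivPow {d : ℕ} (α : Fin d → ℕ) :
    Module.End ℝ (MvPolynomial (Fin d) ℝ) :=
  ((List.finRange d).map fun i => ((MvPolynomial.pderiv i).toLinearMap ^ α i)).prod

/-- The Hermite ideal `I(X,p)`, as a set: all polynomials whose partial derivatives of
order up to `p q` all vanish at `X q`, for every `q`. -/
def hermiteSet {d m : ℕ} (X : Fin m → (Fin d → ℝ)) (p : Fin m → ℕ) :
    Set (MvPolynomial (Fin d) ℝ) :=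
  {f | ∀ q, ∀ α : Fin d → ℕ, (∑ i, α i) ≤ p q → MvPolynomial.eval (X q) (pderivPow α f) = 0}

lemma pderiv_mem_pow (i : Fin 2) (I : Ideal (MvPolynomial (Fin 2) ℝ)) :
    ∀ (k : ℕ) (f : MvPolynomial (Fin 2) ℝ), f ∈ I ^ (k + 1) → pderiv i f ∈ I ^ k := by
  intro k
  induction k with
  | zero => intro f _; simp
  | succ k ih =>
    intro f hf
    rw [pow_succ] at hf
    refine Submodule.mul_induction_on hf ?_ ?_
    · intro a ha b hb
      have h1 : pderiv i a * b ∈ I ^ (k + 1) := by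
        rw [pow_succ]; exact Ideal.mul_mem_mul (ih a ha) hb
      have h2 : a * pderiv i b ∈ I ^ (k + 1) := Ideal.mul_mem_right _ _ ha
      rw [pderiv_mul]; exact Ideal.add_mem _ h1 h2
    · intro x y hx hy; rw [map_add]; exact Ideal.add_mem _ hx hy

lemma pderiv_iter_mem_pow (i : Fin 2) (I : Ideal (MvPolynomial (Fin 2) ℝ)) (j : ℕ) :
    ∀ (k : ℕ) (f : MvPolynomial (Fin 2) ℝ), f ∈ I ^ (j + k) →
      (((pderiv i).toLinearMap) ^ j) f ∈ I ^ k := by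
  induction j with
  | zero => intro k f hf; simpa using hf
  | succ j ih =>
    intro k f hf
    rw [pow_succ, Module.End.mul_apply]
    apply ih
    apply pderiv_mem_pow i I (j + k) f
    rwa [show j + k + 1 = j + 1 + k by ring]

lemma pderivPow_eq (α : Fin 2 → ℕ) (f : MvPolynomial (Fin 2) ℝ) :
    pderivPow α f
      = (((pderiv 0).toLinearMap) ^ (α 0)) ((((pderiv 1).toLinearMap) ^ (α 1)) f) := by
  have h2 : List.finRange 2 = [0, 1] := by decide
  simp [pderivPow, h2, Module.End.mul_apply]

lemma eval_pderivPow_zero (pt : Fin 2 → ℝ) (k : ℕ) (f : MvPolynomial (Fin 2) ℝ)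
    (α : Fin 2 → ℕ)
    (hf : f ∈ (Ideal.span {X 0 - C (pt 0), X 1 - C (pt 1)} : Ideal (MvPolynomial (Fin 2) ℝ)) ^ k)
    (hα : α 0 + α 1 < k) :
    eval pt (pderivPow α f) = 0 := by
  set I : Ideal (MvPolynomial (Fin 2) ℝ) := Ideal.span {X 0 - C (pt 0), X 1 - C (pt 1)} with hI
  have h1 : pderivPow α f ∈ I ^ (k - α 0 - α 1) := by
    rw [pderivPow_eq]
    apply pderiv_iter_mem_pow
    apply pderiv_iter_mem_pow
    rwa [show α 1 + (α 0 + (k - α 0 - α 1)) = k by omega]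
  have h2 : pderivPow α f ∈ I := Ideal.pow_le_self (by omega) h1
  have h3 : I ≤ RingHom.ker (eval pt) := by
    rw [hI, Ideal.span_le]
    intro g hg
    simp only [Set.mem_insert_iff, Set.mem_singleton_iff] at hg
    rcases hg with h | h <;> subst h <;> simp [RingHom.mem_ker]
  exact RingHom.mem_ker.1 (h3 h2)

noncomputable def linePoly (P Q : Fin 2 → ℝ) : MvPolynomial (Fin 2) ℝ :=
  C (Q 0 - P 0) * (X 1 - C (P 1)) - C (Q 1 - P 1) * (X 0 - C (P 0))

lemma linePoly_mem (P Q : Fin 2 → ℝ) :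
    linePoly P Q ∈ (Ideal.span {X 0 - C (P 0), X 1 - C (P 1)} : Ideal (MvPolynomial (Fin 2) ℝ)) := by
  apply sub_mem
  · exact Ideal.mul_mem_left _ _ (Ideal.subset_span (by simp))
  · exact Ideal.mul_mem_left _ _ (Ideal.subset_span (by simp))

lemma linePoly_mem' (P Q : Fin 2 → ℝ) :
    linePoly P Q ∈ (Ideal.span {X 0 - C (Q 0), X 1 - C (Q 1)} : Ideal (MvPolynomial (Fin 2) ℝ)) := by
  have h : linePoly P Q
      = C (Q 0 - P 0) * (X 1 - C (Q 1)) - C (Q 1 - P 1) * (X 0 - C (Q 0)) := by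
    simp only [linePoly, map_sub]; ring
  rw [h]
  apply sub_mem
  · exact Ideal.mul_mem_left _ _ (Ideal.subset_span (by simp))
  · exact Ideal.mul_mem_left _ _ (Ideal.subset_span (by simp))

lemma linePoly_ne_zero {P Q : Fin 2 → ℝ} (h : P ≠ Q) : linePoly P Q ≠ 0 := by
  intro h0
  have h1 := congrArg (eval ![P 0 - (Q 1 - P 1), P 1 + (Q 0 - P 0)]) h0
  simp only [linePoly, map_sub, map_mul, eval_C, eval_X, map_zero,
    Matrix.cons_val_zero, Matrix.cons_val_one, Matrix.head_cons] at h1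
  have hsum : (Q 0 - P 0) ^ 2 + (Q 1 - P 1) ^ 2 = 0 := by linear_combination h1
  have e0 : P 0 = Q 0 := by nlinarith [sq_nonneg (Q 0 - P 0), sq_nonneg (Q 1 - P 1)]
  have e1 : P 1 = Q 1 := by nlinarith [sq_nonneg (Q 0 - P 0), sq_nonneg (Q 1 - P 1)]
  apply h
  funext i
  fin_cases i
  · exact e0
  · exact e1

lemma linePoly_totalDegree (P Q : Fin 2 → ℝ) : (linePoly P Q).totalDegree ≤ 1 := by
  have h : linePoly P Q = C (Q 0 - P 0) * X 1 + C (-(Q 1 - P 1)) * X 0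
      + C ((Q 1 - P 1) * P 0 - (Q 0 - P 0) * P 1) := by
    simp only [linePoly, map_sub, map_mul, map_neg]; ring
  rw [h]
  refine le_trans (totalDegree_add _ _) (max_le (le_trans (totalDegree_add _ _) (max_le ?_ ?_)) ?_)
  · refine le_trans (totalDegree_mul _ _) ?_
    rw [totalDegree_C, totalDegree_X]
  · refine le_trans (totalDegree_mul _ _) ?_
    rw [totalDegree_C, totalDegree_X]
  · rw [totalDegree_C]; omega

lemma linePoly_pow_totalDegree (P Q : Fin 2 → ℝ) (k : ℕ) :
    ((linePoly P Q) ^ k).totalDegree ≤ k := by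
  refine le_trans (totalDegree_pow _ _) ?_
  calc k * (linePoly P Q).totalDegree ≤ k * 1 :=
        Nat.mul_le_mul_left k (linePoly_totalDegree P Q)
    _ = k := by omega

lemma two_choose : ∀ m : ℕ, 2 * Nat.choose (m + 2) 2 = (m + 1) * (m + 2)
  | 0 => rfl
  | (m + 1) => by
    rw [show m + 1 + 2 = (m + 2) + 1 from rfl, Nat.choose_succ_succ, Nat.choose_one_right,
      Nat.mul_add, two_choose m]
    ring

lemma feas (q0 q1 q2 q3 n : ℕ) (h01 : q0 ≤ q1) (h12 : q1 ≤ q2) (h23 : q2 ≤ q3)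
    (h3 : q3 ≤ n) (hS : q0 + q1 + q2 + q3 ≤ 2 * n) :
    ∃ a b c e u v : ℕ, q0 ≤ a + c + u ∧ q1 ≤ a + e + v ∧ q2 ≤ b + c + v ∧
      q3 ≤ b + e + u ∧ a + b + c + e + u + v ≤ n := by
  by_cases hbig : q0 + q1 + q2 ≤ q3
  · exact ⟨0, q3 - q0 - q1, 0, q1, q0, 0, by omega, by omega, by omega, by omega, by omega⟩
  · set w := n - q3 with hw
    set u := q0 - w with hu
    set e := q1 - w with he
    set b := q3 - u - e with hb
    set r0 := q0 - u with hr0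
    set r1 := q1 - e with hr1
    set r2 := q2 - b with hr2
    by_cases hA : r0 + r1 ≤ r2
    · exact ⟨0, b, r0, e, u, r2 - r0, by omega, by omega, by omega, by omega, by omega⟩
    by_cases hB : r0 + r2 ≤ r1
    · exact ⟨r0, b, 0, e, u, r1 - r0, by omega, by omega, by omega, by omega, by omega⟩
    · exact ⟨(r0 + r1 - r2) / 2, b, r0 - (r0 + r1 - r2) / 2, e, u,
        r1 - (r0 + r1 - r2) / 2, by omega, by omega, by omega, by omega, by omega⟩

lemma keyA (q0 q1 q2 q3 n : ℕ) (hq0 : 1 ≤ q0) (hq1 : 1 ≤ q1) (hq2 : 1 ≤ q2)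
    (h01 : q0 ≤ q1) (h12 : q1 ≤ q2) (h23 : q2 ≤ q3)
    (key : (n + 1) * (n + 2) = q0 * (q0 + 1) + q1 * (q1 + 1) + q2 * (q2 + 1) + q3 * (q3 + 1)) :
    q3 ≤ n := by
  by_contra hc
  push_neg at hc
  have h1 : (n + 1) * (n + 2) ≤ q3 * (q3 + 1) := Nat.mul_le_mul (by omega) (by omega)
  nlinarith

lemma keyB (q0 q1 q2 q3 n : ℕ)
    (h01 : q0 ≤ q1) (h12 : q1 ≤ q2) (h23 : q2 ≤ q3) (h02 : q0 + 1 ≤ q2) (h13 : q1 + 1 ≤ q3)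
    (key : (n + 1) * (n + 2) = q0 * (q0 + 1) + q1 * (q1 + 1) + q2 * (q2 + 1) + q3 * (q3 + 1)) :
    q0 + q1 + q2 + q3 ≤ 2 * n := by
  have hZ : (4 : ℤ) * ((q0 : ℤ) * (q0 + 1) + q1 * (q1 + 1) + q2 * (q2 + 1) + q3 * (q3 + 1))
      ≥ ((q0 : ℤ) + q1 + q2 + q3 + 2) ^ 2 := by
    have h01' : (q0 : ℤ) ≤ q1 := by exact_mod_cast h01
    have h12' : (q1 : ℤ) ≤ q2 := by exact_mod_cast h12
    have h23' : (q2 : ℤ) ≤ q3 := by exact_mod_cast h23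
    have h02' : (q0 : ℤ) + 1 ≤ q2 := by exact_mod_cast h02
    have h13' : (q1 : ℤ) + 1 ≤ q3 := by exact_mod_cast h13
    by_cases hcase : (q0 : ℤ) + 2 ≤ q3
    · nlinarith [sq_nonneg ((q3 : ℤ) - q0 - 2), sq_nonneg ((q1 : ℤ) - q0), sq_nonneg ((q2 : ℤ) - q1),
        sq_nonneg ((q3 : ℤ) - q2), sq_nonneg ((q2 : ℤ) - q0 - 1), sq_nonneg ((q3 : ℤ) - q1 - 1)]
    · push_neg at hcase
      have e1 : (q1 : ℤ) = q0 := by omega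
      have e2 : (q2 : ℤ) = q0 + 1 := by omega
      have e3 : (q3 : ℤ) = q0 + 1 := by omega
      rw [e1, e2, e3]; ring_nf; nlinarith []
  by_contra hc
  push_neg at hc
  have hc' : (2 : ℤ) * n + 1 ≤ (q0 : ℤ) + q1 + q2 + q3 := by exact_mod_cast hc
  have key' : ((n : ℤ) + 1) * (n + 2)
      = (q0 : ℤ) * (q0 + 1) + q1 * (q1 + 1) + q2 * (q2 + 1) + q3 * (q3 + 1) := by
    exact_mod_cast key
  nlinarith [hZ, hc', key']

set_option maxHeartbeats 1000000 in
/-- Hermite interpolation on 4 nodes in `ℝ²` with `p_4 > p_2` and `p_3 > p_1` is singular. -/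
theorem singular_four_nodes {n : ℕ} (p : Fin 4 → ℕ) (hmono : Monotone p)
    (h42 : p 1 < p 3) (h31 : p 0 < p 2)
    (hdim : Nat.choose (n + 2) 2 = ∑ q, Nat.choose (p q + 2) 2)
    (X : Fin 4 → (Fin 2 → ℝ)) (hX : Function.Injective X) :
    ∃ f : MvPolynomial (Fin 2) ℝ, f ≠ 0 ∧ f.totalDegree ≤ n ∧ f ∈ hermiteSet X p := by
  have h01 : p 0 ≤ p 1 := hmono (by decide)
  have h12 : p 1 ≤ p 2 := hmono (by decide)
  have h23 : p 2 ≤ p 3 := hmono (by decide)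
  rw [Fin.sum_univ_four] at hdim
  have key : (n + 1) * (n + 2) = (p 0 + 1) * (p 0 + 1 + 1) + (p 1 + 1) * (p 1 + 1 + 1)
      + (p 2 + 1) * (p 2 + 1 + 1) + (p 3 + 1) * (p 3 + 1 + 1) := by
    have l := two_choose n
    have l0 := two_choose (p 0)
    have l1 := two_choose (p 1)
    have l2 := two_choose (p 2)
    have l3 := two_choose (p 3)
    linarith [hdim, l, l0, l1, l2, l3]
  have hA : p 3 + 1 ≤ n :=
    keyA (p 0 + 1) (p 1 + 1) (p 2 + 1) (p 3 + 1) n (by omega) (by omega) (by omega)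
      (by omega) (by omega) (by omega) key
  have hB : (p 0 + 1) + (p 1 + 1) + (p 2 + 1) + (p 3 + 1) ≤ 2 * n :=
    keyB (p 0 + 1) (p 1 + 1) (p 2 + 1) (p 3 + 1) n (by omega) (by omega) (by omega)
      (by omega) (by omega) key
  obtain ⟨a, b, c, e, u, v, k0, k1, k2, k3, ksum⟩ :=
    feas (p 0 + 1) (p 1 + 1) (p 2 + 1) (p 3 + 1) n (by omega) (by omega) (by omega) hA hB
  have d01 : X 0 ≠ X 1 := fun h => absurd (hX h) (by decide)
  have d02 : X 0 ≠ X 2 := fun h => absurd (hX h) (by decide)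
  have d03 : X 0 ≠ X 3 := fun h => absurd (hX h) (by decide)
  have d12 : X 1 ≠ X 2 := fun h => absurd (hX h) (by decide)
  have d13 : X 1 ≠ X 3 := fun h => absurd (hX h) (by decide)
  have d23 : X 2 ≠ X 3 := fun h => absurd (hX h) (by decide)
  set L01 := linePoly (X 0) (X 1) with hL01
  set L23 := linePoly (X 2) (X 3) with hL23
  set L02 := linePoly (X 0) (X 2) with hL02
  set L13 := linePoly (X 1) (X 3) with hL13
  set L03 := linePoly (X 0) (X 3) with hL03
  set L12 := linePoly (X 1) (X 2) with hL12
  set f : MvPolynomial (Fin 2) ℝ :=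
    L01 ^ a * L23 ^ b * L02 ^ c * L13 ^ e * L03 ^ u * L12 ^ v with hf
  refine ⟨f, ?_, ?_, ?_⟩
  · apply mul_ne_zero
    apply mul_ne_zero
    apply mul_ne_zero
    apply mul_ne_zero
    apply mul_ne_zero
    all_goals first
      | exact pow_ne_zero _ (linePoly_ne_zero d01)
      | exact pow_ne_zero _ (linePoly_ne_zero d23)
      | exact pow_ne_zero _ (linePoly_ne_zero d02)
      | exact pow_ne_zero _ (linePoly_ne_zero d13)
      | exact pow_ne_zero _ (linePoly_ne_zero d03)
      | exact pow_ne_zero _ (linePoly_ne_zero d12)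
  · have t1 : (L01 ^ a * L23 ^ b).totalDegree ≤ a + b :=
      le_trans (totalDegree_mul _ _)
        (Nat.add_le_add (linePoly_pow_totalDegree _ _ _) (linePoly_pow_totalDegree _ _ _))
    have t2 : (L01 ^ a * L23 ^ b * L02 ^ c).totalDegree ≤ a + b + c :=
      le_trans (totalDegree_mul _ _) (Nat.add_le_add t1 (linePoly_pow_totalDegree _ _ _))
    have t3 : (L01 ^ a * L23 ^ b * L02 ^ c * L13 ^ e).totalDegree ≤ a + b + c + e :=
      le_trans (totalDegree_mul _ _) (Nat.add_le_add t2 (linePoly_pow_totalDegree _ _ _))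
    have t4 : (L01 ^ a * L23 ^ b * L02 ^ c * L13 ^ e * L03 ^ u).totalDegree ≤ a + b + c + e + u :=
      le_trans (totalDegree_mul _ _) (Nat.add_le_add t3 (linePoly_pow_totalDegree _ _ _))
    have t5 : f.totalDegree ≤ a + b + c + e + u + v :=
      le_trans (totalDegree_mul _ _) (Nat.add_le_add t4 (linePoly_pow_totalDegree _ _ _))
    omega
  · intro q α hα
    rw [Fin.sum_univ_two] at hα
    have key0 : f ∈ (Ideal.span {MvPolynomial.X 0 - C (X 0 0), MvPolynomial.X 1 - C (X 0 1)} :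
        Ideal (MvPolynomial (Fin 2) ℝ)) ^ (p 0 + 1) := by
      set I := (Ideal.span {MvPolynomial.X 0 - C (X 0 0), MvPolynomial.X 1 - C (X 0 1)} :
        Ideal (MvPolynomial (Fin 2) ℝ)) with hI
      have hre : f = (L01 ^ a * L02 ^ c * L03 ^ u) * (L23 ^ b * L13 ^ e * L12 ^ v) := by
        rw [hf]; ring
      have m1 : L01 ^ a * L02 ^ c ∈ I ^ (a + c) := by
        rw [pow_add]
        exact Ideal.mul_mem_mul (Ideal.pow_mem_pow (linePoly_mem _ _) a)
          (Ideal.pow_mem_pow (linePoly_mem _ _) c)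
      have m2 : L01 ^ a * L02 ^ c * L03 ^ u ∈ I ^ (a + c + u) := by
        rw [pow_add]
        exact Ideal.mul_mem_mul m1 (Ideal.pow_mem_pow (linePoly_mem _ _) u)
      have m3 : f ∈ I ^ (a + c + u) := by
        rw [hre]; exact Ideal.mul_mem_right _ _ m2
      exact Ideal.pow_le_pow_right k0 m3
    have key1 : f ∈ (Ideal.span {MvPolynomial.X 0 - C (X 1 0), MvPolynomial.X 1 - C (X 1 1)} :
        Ideal (MvPolynomial (Fin 2) ℝ)) ^ (p 1 + 1) := by
      set I := (Ideal.span {MvPolynomial.X 0 - C (X 1 0), MvPolynomial.X 1 - C (X 1 1)} :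
        Ideal (MvPolynomial (Fin 2) ℝ)) with hI
      have hre : f = (L01 ^ a * L13 ^ e * L12 ^ v) * (L23 ^ b * L02 ^ c * L03 ^ u) := by
        rw [hf]; ring
      have m1 : L01 ^ a * L13 ^ e ∈ I ^ (a + e) := by
        rw [pow_add]
        exact Ideal.mul_mem_mul (Ideal.pow_mem_pow (linePoly_mem' _ _) a)
          (Ideal.pow_mem_pow (linePoly_mem _ _) e)
      have m2 : L01 ^ a * L13 ^ e * L12 ^ v ∈ I ^ (a + e + v) := by
        rw [pow_add]
        exact Ideal.mul_mem_mul m1 (Ideal.pow_mem_pow (linePoly_mem _ _) v)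
      have m3 : f ∈ I ^ (a + e + v) := by
        rw [hre]; exact Ideal.mul_mem_right _ _ m2
      exact Ideal.pow_le_pow_right k1 m3
    have key2 : f ∈ (Ideal.span {MvPolynomial.X 0 - C (X 2 0), MvPolynomial.X 1 - C (X 2 1)} :
        Ideal (MvPolynomial (Fin 2) ℝ)) ^ (p 2 + 1) := by
      set I := (Ideal.span {MvPolynomial.X 0 - C (X 2 0), MvPolynomial.X 1 - C (X 2 1)} :
        Ideal (MvPolynomial (Fin 2) ℝ)) with hI
      have hre : f = (L23 ^ b * L02 ^ c * L12 ^ v) * (L01 ^ a * L13 ^ e * L03 ^ u) := by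
        rw [hf]; ring
      have m1 : L23 ^ b * L02 ^ c ∈ I ^ (b + c) := by
        rw [pow_add]
        exact Ideal.mul_mem_mul (Ideal.pow_mem_pow (linePoly_mem _ _) b)
          (Ideal.pow_mem_pow (linePoly_mem' _ _) c)
      have m2 : L23 ^ b * L02 ^ c * L12 ^ v ∈ I ^ (b + c + v) := by
        rw [pow_add]
        exact Ideal.mul_mem_mul m1 (Ideal.pow_mem_pow (linePoly_mem' _ _) v)
      have m3 : f ∈ I ^ (b + c + v) := by
        rw [hre]; exact Ideal.mul_mem_right _ _ m2
      exact Ideal.pow_le_pow_right k2 m3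
    have key3 : f ∈ (Ideal.span {MvPolynomial.X 0 - C (X 3 0), MvPolynomial.X 1 - C (X 3 1)} :
        Ideal (MvPolynomial (Fin 2) ℝ)) ^ (p 3 + 1) := by
      set I := (Ideal.span {MvPolynomial.X 0 - C (X 3 0), MvPolynomial.X 1 - C (X 3 1)} :
        Ideal (MvPolynomial (Fin 2) ℝ)) with hI
      have hre : f = (L23 ^ b * L13 ^ e * L03 ^ u) * (L01 ^ a * L02 ^ c * L12 ^ v) := by
        rw [hf]; ring
      have m1 : L23 ^ b * L13 ^ e ∈ I ^ (b + e) := by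
        rw [pow_add]
        exact Ideal.mul_mem_mul (Ideal.pow_mem_pow (linePoly_mem' _ _) b)
          (Ideal.pow_mem_pow (linePoly_mem' _ _) e)
      have m2 : L23 ^ b * L13 ^ e * L03 ^ u ∈ I ^ (b + e + u) := by
        rw [pow_add]
        exact Ideal.mul_mem_mul m1 (Ideal.pow_mem_pow (linePoly_mem' _ _) u)
      have m3 : f ∈ I ^ (b + e + u) := by
        rw [hre]; exact Ideal.mul_mem_right _ _ m2
      exact Ideal.pow_le_pow_right k3 m3
    fin_cases q
    · exact eval_pderivPow_zero (X 0) (p 0 + 1) f α key0 (by have hα' : α 0 + α 1 ≤ p 0 := hα; omega)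
    · exact eval_pderivPow_zero (X 1) (p 1 + 1) f α key1 (by have hα' : α 0 + α 1 ≤ p 1 := hα; omega)
    · exact eval_pderivPow_zero (X 2) (p 2 + 1) f α key2 (by have hα' : α 0 + α 1 ≤ p 2 := hα; omega)
    · exact eval_pderivPow_zero (X 3) (p 3 + 1) f α key3 (by have hα' : α 0 + α 1 ≤ p 3 := hα; omega)
end

section
/- There exist five pairwise distinct points X_1, …, X_5 in ℝ³ such that the uniform Hermite interpolation problem of order 1 is regular on Π_3^3: for every family of real values c_{q,α} (1 ≤ q ≤ 5, α ∈ ℕ³ with |α| ≤ 1) there exists a unique polynomial f in three variables of total degree at most 3 with ∂^α f(X_q) = c_{q,α} for all 1 ≤ q ≤ 5 and all |α| ≤ 1. (Note the dimension count binom(3+3,3) = 20 = 5·binom(1+3,3).) -/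
/-!
Hermite interpolation is a linear map from `Π_3^3` to the data space, and both have dimension
`20 = 5 · 4`, so regularity is equivalent to unisolvence: a cubic whose values and gradients all
vanish at the nodes `0, e₁, e₂, e₃, (1,1,1)` is zero. In the monomial basis these conditions are an
explicit nonsingular `20 × 20` linear system for the coefficients.
-/

open MvPolynomial

open Module

section HermiteData

variable {d : ℕ}

@[simp]
lemma pderivPow_zero : pderivPow (0 : Fin d → ℕ) = 1 := by
  simp [pderivPow]

@[simp]
lemma pderivPow_single_one (i : Fin d) :
    pderivPow (Pi.single i 1) = (pderiv i).toLinearMap := by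
  rw [pderivPow, List.prod_map_eq_pow_single i]
  · simp [List.count_eq_one_of_mem (List.nodup_finRange d) (List.mem_finRange i)]
  · intro j hj _
    simp [hj]

/-- The multi-indices `α` with `|α| ≤ 1`: `none` stands for `α = 0`, `some i` for `α = eᵢ`. -/
def orderOneIndex : Option (Fin d) → Fin d → ℕ
  | none => 0
  | some i => Pi.single i 1

lemma sum_orderOneIndex_le_one (k : Option (Fin d)) : ∑ i, orderOneIndex k i ≤ 1 := by
  cases k <;> simp [orderOneIndex]

lemma exists_orderOneIndex_of_sum_le_one {α : Fin d → ℕ} (hα : ∑ i, α i ≤ 1) :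
    ∃ k, α = orderOneIndex k := by
  rcases Nat.le_one_iff_eq_zero_or_eq_one.mp hα with h | h
  · exact ⟨none, funext fun i => Finset.sum_eq_zero_iff.mp h i (Finset.mem_univ i)⟩
  · obtain ⟨i, hi⟩ := (Finsupp.sum_eq_one_iff (Finsupp.equivFunOnFinite.symm α)).mp
      (by rwa [Finsupp.sum_fintype _ _ fun _ => rfl])
    exact ⟨some i, by rw [orderOneIndex, ← Finsupp.single_eq_pi_single, ← hi]; rfl⟩

noncomputable def hermiteData {n : ℕ} (X : Fin n → Fin d → ℝ) :
    MvPolynomial (Fin d) ℝ →ₗ[ℝ] Fin n → Option (Fin d) → ℝ :=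
  LinearMap.pi fun q => LinearMap.pi fun k =>
    (aeval (X q)).toLinearMap ∘ₗ pderivPow (orderOneIndex k)

variable {n : ℕ} (X : Fin n → Fin d → ℝ)

lemma hermiteData_apply (f : MvPolynomial (Fin d) ℝ) (q : Fin n) (k : Option (Fin d)) :
    hermiteData X f q k = eval (X q) (pderivPow (orderOneIndex k) f) := by
  simp [hermiteData]

lemma hermiteData_eq_iff (f : MvPolynomial (Fin d) ℝ) (c : Fin n → (Fin d → ℕ) → ℝ) :
    hermiteData X f = (fun q k => c q (orderOneIndex k)) ↔
      ∀ q, ∀ α : Fin d → ℕ, ∑ i, α i ≤ 1 → eval (X q) (pderivPow α f) = c q α := by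
  refine ⟨fun h q α hα => ?_, fun h => funext₂ fun q k => ?_⟩
  · obtain ⟨k, rfl⟩ := exists_orderOneIndex_of_sum_le_one hα
    rw [← hermiteData_apply, h]
  · rw [hermiteData_apply, h q _ (sum_orderOneIndex_le_one k)]

theorem existsUnique_hermite_interpolant_of_injective {m : ℕ}
    (hdim : finrank ℝ (restrictTotalDegree (Fin d) ℝ m) = n * (d + 1))
    (hinj : ∀ f : MvPolynomial (Fin d) ℝ, f.totalDegree ≤ m → hermiteData X f = 0 → f = 0)
    (c : Fin n → (Fin d → ℕ) → ℝ) :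
    ∃! f : MvPolynomial (Fin d) ℝ, f.totalDegree ≤ m ∧
      ∀ q, ∀ α : Fin d → ℕ, ∑ i, α i ≤ 1 → eval (X q) (pderivPow α f) = c q α := by
  set L := (hermiteData X).domRestrict (restrictTotalDegree (Fin d) ℝ m)
  have hL_inj : Function.Injective L := by
    refine (injective_iff_map_eq_zero L).mpr fun f hf => Subtype.ext ?_
    exact hinj f ((mem_restrictTotalDegree _ _ _).mp f.2) hf
  have hL_surj : Function.Surjective L :=
    (LinearMap.injective_iff_surjective_of_finrank_eq_finrank
      (by rw [hdim, finrank_pi_fintype]; simp)).mp hL_inj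
  simp only [← hermiteData_eq_iff, ← mem_restrictTotalDegree (R := ℝ)]
  obtain ⟨f, hf⟩ := hL_surj fun q k => c q (orderOneIndex k)
  exact ⟨f, ⟨f.2, hf⟩, fun g ⟨hg, hgc⟩ => congrArg Subtype.val
    (hL_inj (a₁ := ⟨g, hg⟩) (hgc.trans hf.symm))⟩

end HermiteData

lemma finrank_restrictTotalDegree {σ R : Type*} [CommRing R] [StrongRankCondition R] (m : ℕ) :
    finrank R (restrictTotalDegree σ R m) = Nat.card {s : σ →₀ ℕ | s.sum (fun _ e => e) ≤ m} :=
  finrank_eq_nat_card_basis (basisRestrictSupport R _)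

def cubicExponentTable : Fin 20 → Fin 3 → ℕ :=
  ![![0,0,0], ![1,0,0], ![0,1,0], ![0,0,1], ![2,0,0], ![0,2,0], ![0,0,2], ![1,1,0], ![1,0,1],
    ![0,1,1], ![3,0,0], ![0,3,0], ![0,0,3], ![2,1,0], ![2,0,1], ![1,2,0], ![0,2,1], ![1,0,2],
    ![0,1,2], ![1,1,1]]

lemma range_cubicExponentTable :
    Set.range cubicExponentTable = {t | ∑ i, t i ≤ 3} := by
  ext t
  refine ⟨?_, fun ht => ?_⟩
  · rintro ⟨j, rfl⟩
    revert j; decide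
  · have hbound (i : Fin 3) : t i < 4 :=
      Nat.lt_succ_of_le ((Finset.single_le_sum (by simp) (Finset.mem_univ i)).trans ht)
    have hbounded : ∀ u : Fin 3 → Fin 4, ∑ i, (u i : ℕ) ≤ 3 →
        ∃ j, cubicExponentTable j = fun i => (u i : ℕ) := by decide
    exact hbounded (fun i => ⟨t i, hbound i⟩) ht

noncomputable def cubicExponent (j : Fin 20) : Fin 3 →₀ ℕ :=
  Finsupp.equivFunOnFinite.symm (cubicExponentTable j)

lemma cubicExponent_injective : Function.Injective cubicExponent :=
  Finsupp.equivFunOnFinite.symm.injective.comp (by decide : Function.Injective cubicExponentTable)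

lemma range_cubicExponent :
    Set.range cubicExponent = {s : Fin 3 →₀ ℕ | s.sum (fun _ e => e) ≤ 3} := by
  ext s
  rw [Set.mem_ofPred_eq, Finsupp.sum_fintype s (fun _ e => e) fun _ => rfl]
  change _ ↔ ⇑s ∈ {t : Fin 3 → ℕ | ∑ i, t i ≤ 3}
  simp only [← range_cubicExponentTable, Set.mem_range, cubicExponent, Equiv.symm_apply_eq]
  rfl

lemma finrank_restrictTotalDegree_three_three :
    finrank ℝ (restrictTotalDegree (Fin 3) ℝ 3) = 20 := by
  rw [finrank_restrictTotalDegree, ← range_cubicExponent,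
    Nat.card_range_of_injective cubicExponent_injective, Nat.card_eq_fintype_card,
    Fintype.card_fin]

lemma eq_sum_cubicExponent {f : MvPolynomial (Fin 3) ℝ} (hf : f.totalDegree ≤ 3) :
    f = ∑ j, monomial (cubicExponent j) (coeff (cubicExponent j) f) := by
  ext s
  simp only [coeff_sum, coeff_monomial]
  by_cases hs : s ∈ Set.range cubicExponent
  · obtain ⟨j, rfl⟩ := hs
    simp [cubicExponent_injective.eq_iff]
  · rw [Finset.sum_eq_zero fun j _ => if_neg fun h => hs ⟨j, h⟩]
    rw [range_cubicExponent, Set.mem_ofPred_eq, not_le] at hs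
    exact coeff_eq_zero_of_totalDegree_lt (hf.trans_lt hs)

def fiveNodes : Fin 5 → Fin 3 → ℝ := ![![0,0,0], ![1,0,0], ![0,1,0], ![0,0,1], ![1,1,1]]

lemma fiveNodes_injective : Function.Injective fiveNodes := by
  intro i j h
  fin_cases i <;> fin_cases j <;> simp_all [fiveNodes, funext_iff, Fin.forall_fin_succ]

lemma eq_zero_of_hermiteData_fiveNodes_sum_monomial (a : Fin 20 → ℝ)
    (h : hermiteData fiveNodes (∑ j, monomial (cubicExponent j) (a j)) = 0) : a = 0 := by
  simp only [funext_iff, Fin.forall_fin_succ, Option.forall, IsEmpty.forall_iff,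
    hermiteData_apply] at h
  simp [orderOneIndex, Fin.sum_univ_succ, cubicExponent, cubicExponentTable, fiveNodes,
    monomial_eq, Finsupp.prod_fintype, Fin.prod_univ_three, Derivation.leibniz,
    Derivation.leibniz_pow] at h
  casesm* _ ∧ _
  funext j
  fin_cases j <;> simp <;> linarith

lemma eq_zero_of_hermiteData_fiveNodes {f : MvPolynomial (Fin 3) ℝ} (hf : f.totalDegree ≤ 3)
    (h : hermiteData fiveNodes f = 0) : f = 0 := by
  rw [eq_sum_cubicExponent hf] at h ⊢
  have hcoeff := congrFun (eq_zero_of_hermiteData_fiveNodes_sum_monomial _ h)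
  simp only [Pi.zero_apply] at hcoeff
  simp [hcoeff]

/-- There exist 5 pairwise distinct nodes in `ℝ³` for which uniform Hermite interpolation
of order 1 is regular on `Π_3^3`. -/
theorem exists_regular_five_nodes_order_one :
    ∃ X : Fin 5 → (Fin 3 → ℝ), Function.Injective X ∧
      ∀ c : Fin 5 → (Fin 3 → ℕ) → ℝ, ∃! f : MvPolynomial (Fin 3) ℝ,
        f.totalDegree ≤ 3 ∧ ∀ q, ∀ α : Fin 3 → ℕ, (∑ i, α i) ≤ 1 →
          MvPolynomial.eval (X q) (pderivPow α f) = c q α :=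
  ⟨fiveNodes, fiveNodes_injective,
    existsUnique_hermite_interpolant_of_injective fiveNodes finrank_restrictTotalDegree_three_three
      fun _ => eq_zero_of_hermiteData_fiveNodes⟩
end
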